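/- For all natural numbers a, b, c ≥ 1: 5^(^(a+c) 5 + ^(b+c) 5) < ^(5^(a+b) + c) 5. (This is the rank inequality justifying the Distribution(a) step: replacing (A∧B)∨C by (A∨C)∧(B∨C) strictly reduces rank.) -/

import Mathlib

/-!
Write `m = max a b` and `5 ^ (a + b) + c = N + 1`. Since `tow` is strictly monotone and
`2 t < 5 ^ t`, the exponent on the left is at most `2 · tow (m + c) < tow (m + c + 1)`.
Bernoulli's inequality gives `m + 2 ≤ 5 ^ (a + b)` as soon as `a + b ≥ 1`, i.e. `m + c + 1 ≤ N`,
so the exponent is below `tow N`, and the claim follows by applying `5 ^ ·` to both sides.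
-/

/-- Tetration tower of 5's: `tow 1 = 5`, `tow (n+1) = 5 ^ tow n`. -/
def tow : ℕ → ℕ
  | 0 => 1
  | n + 1 => 5 ^ tow n

theorem tow_succ (n : ℕ) : tow (n + 1) = 5 ^ tow n := rfl

theorem tow_strictMono : StrictMono tow :=
  strictMono_nat_of_lt_succ fun _ => Nat.lt_pow_self (by norm_num)

theorem two_mul_lt_five_pow (t : ℕ) : 2 * t < 5 ^ t := by
  have bernoulli : 1 + t * 4 ≤ 5 ^ t :=
    one_add_mul_le_pow_of_sq_nonneg (a := 4) (by positivity) (by positivity) (by positivity) t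
  omega

theorem tow_add_tow_lt_tow_succ {i j m : ℕ} (hi : i ≤ m) (hj : j ≤ m) :
    tow i + tow j < tow (m + 1) :=
  calc tow i + tow j ≤ 2 * tow m := by
        have := tow_strictMono.monotone hi
        have := tow_strictMono.monotone hj
        omega
    _ < 5 ^ tow m := two_mul_lt_five_pow _

theorem max_add_two_le_five_pow {a b : ℕ} (hab : 1 ≤ a + b) : max a b + 2 ≤ 5 ^ (a + b) := by
  have := two_mul_lt_five_pow (a + b)
  omega

theorem distribution_rank_lt_general (a b c : ℕ) (hb : 1 ≤ b) :
    5 ^ (tow (a + c) + tow (b + c)) < tow (5 ^ (a + b) + c) := by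
  obtain ⟨N, hN⟩ : ∃ N, 5 ^ (a + b) + c = N + 1 :=
    Nat.exists_eq_add_one.mpr (by positivity)
  have hmN : max a b + c + 1 ≤ N := by
    have := max_add_two_le_five_pow (a := a) (b := b) (by omega)
    omega
  have hexp : tow (a + c) + tow (b + c) < tow N :=
    (tow_add_tow_lt_tow_succ (m := max a b + c) (by omega) (by omega)).trans_le
      (tow_strictMono.monotone hmN)
  rw [hN, tow_succ]
  exact Nat.pow_lt_pow_right (by norm_num) hexp

theorem distribution_rank_lt (a b c : ℕ) (ha : 1 ≤ a) (hb : 1 ≤ b) (hc : 1 ≤ c) :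
    5 ^ (tow (a + c) + tow (b + c)) < tow (5 ^ (a + b) + c) :=
  distribution_rank_lt_general a b c hb
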